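/- For every real number r > 0, every integer n ≥ 1, and every real t ≥ 0, one has t^((n+1)/(n+2)) ≤ e^(r+2) · t + (n+1)^(-(r+2)). -/

import Mathlib

/-!
Below the threshold `t ^ α ≤ c` the constant term alone suffices. Above it, `t ≥ c ^ (1 / α)`, and
since `α - 1 ≤ 0` the factor `t ^ (α - 1)` in `t ^ α = t ^ (α - 1) * t` is at most
`c ^ ((α - 1) / α)`. For `α = N / (N + 1)` and `c = N ^ (-s)` this slope is `N ^ (s / N)`, which is
at most `exp s` because `log N ≤ N`.
-/

open Real

namespace Real

theorem rpow_le_rpow_div_mul_add {α c t : ℝ} (hα0 : 0 < α) (hα1 : α ≤ 1) (hc : 0 < c)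
    (ht : 0 ≤ t) : t ^ α ≤ c ^ ((α - 1) / α) * t + c := by
  rcases le_or_gt (t ^ α) c with hsmall | hlarge
  · have : 0 ≤ c ^ ((α - 1) / α) * t := by positivity
    linarith
  have hthreshold : c ^ (1 / α) < t :=
    calc c ^ (1 / α) < (t ^ α) ^ (1 / α) := rpow_lt_rpow hc.le hlarge (by positivity)
      _ = t := by rw [← rpow_mul ht, mul_one_div_cancel hα0.ne', rpow_one]
  have htpos : 0 < t := (rpow_pos_of_pos hc _).trans hthreshold
  calc t ^ α = t ^ (α - 1) * t := by rw [rpow_sub_one htpos.ne', div_mul_cancel₀ _ htpos.ne']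
    _ ≤ (c ^ (1 / α)) ^ (α - 1) * t :=
        mul_le_mul_of_nonneg_right
          (rpow_le_rpow_of_nonpos (rpow_pos_of_pos hc _) hthreshold.le (by linarith : α - 1 ≤ 0)) ht
    _ = c ^ ((α - 1) / α) * t := by rw [← rpow_mul hc.le, one_div_mul_eq_div]
    _ ≤ c ^ ((α - 1) / α) * t + c := le_add_of_nonneg_right hc.le

theorem rpow_div_self_le_exp {x s : ℝ} (hx : 0 < x) (hs : 0 ≤ s) : x ^ (s / x) ≤ exp s := by
  rw [rpow_def_of_pos hx, exp_le_exp, mul_div_assoc', div_le_iff₀ hx, mul_comm s]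
  exact mul_le_mul_of_nonneg_right (log_le_self hx.le) hs

end Real

theorem elementary_yano_inequality_general (r : ℝ) (hr : 0 < r) (n : ℕ)
    (t : ℝ) (ht : 0 ≤ t) :
    t ^ (((n : ℝ) + 1) / ((n : ℝ) + 2)) ≤
      Real.exp (r + 2) * t + ((n : ℝ) + 1) ^ (-(r + 2)) := by
  set N : ℝ := (n : ℝ) + 1
  have hN : 0 < N := by positivity
  have hα : ((n : ℝ) + 1) / ((n : ℝ) + 2) = N / (N + 1) := by ring
  have hslope : (N ^ (-(r + 2))) ^ ((N / (N + 1) - 1) / (N / (N + 1))) = N ^ ((r + 2) / N) := by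
    rw [← rpow_mul hN.le]
    congr 1
    field_simp
    ring
  rw [hα]
  calc t ^ (N / (N + 1)) ≤ (N ^ (-(r + 2))) ^ ((N / (N + 1) - 1) / (N / (N + 1))) * t
          + N ^ (-(r + 2)) :=
        rpow_le_rpow_div_mul_add (by positivity) (div_le_one_of_le₀ (by linarith) (by positivity))
          (rpow_pos_of_pos hN _) ht
    _ ≤ exp (r + 2) * t + N ^ (-(r + 2)) := by
        rw [hslope]
        gcongr
        exact rpow_div_self_le_exp hN (by linarith)

/-- Elementary inequality used in Yano-type extrapolation:
for `r > 0`, `n ≥ 1` and `t ≥ 0`,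
`t^((n+1)/(n+2)) ≤ e^(r+2) * t + (n+1)^(-(r+2))`. -/
theorem elementary_yano_inequality (r : ℝ) (hr : 0 < r) (n : ℕ) (hn : 1 ≤ n)
    (t : ℝ) (ht : 0 ≤ t) :
    t ^ (((n : ℝ) + 1) / ((n : ℝ) + 2)) ≤
      Real.exp (r + 2) * t + ((n : ℝ) + 1) ^ (-(r + 2)) :=
  elementary_yano_inequality_general r hr n t ht
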